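/- Let P be a poset with least element 0 and Z(P)^× ≠ ∅ such that the reduced zero-divisor graph Γ_E(P) has exactly three vertices. Then Γ_E(P) is isomorphic to the complete graph K_3. -/

import Mathlib

/-- `L(x,y) = {z : z ≤ x ∧ z ≤ y}`, where the least element `0` of the poset is `⊥`. -/
def LSet (P : Type*) [PartialOrder P] [OrderBot P] (x y : P) : Set P := {z | z ≤ x ∧ z ≤ y}

theorem LSet_comm (P : Type*) [PartialOrder P] [OrderBot P] (x y : P) :
    LSet P x y = LSet P y x := by
  ext z; exact ⟨fun h => ⟨h.2, h.1⟩, fun h => ⟨h.2, h.1⟩⟩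

/-- The annihilator of `x`: `ann(x) = {y : L(x,y) = {0}}`. -/
def ann (P : Type*) [PartialOrder P] [OrderBot P] (x : P) : Set P := {y | LSet P x y = {⊥}}

theorem mem_ann_comm (P : Type*) [PartialOrder P] [OrderBot P] (x y : P) :
    y ∈ ann P x ↔ x ∈ ann P y := by
  simp only [ann, Set.mem_setOf_eq, LSet_comm P x y]

/-- The set `Z(P)^× = Z(P) \ {0}` of nonzero zero-divisors of `P`. -/
def ZDivX (P : Type*) [PartialOrder P] [OrderBot P] : Set P :=
  {x | x ≠ ⊥ ∧ ∃ y : P, y ≠ ⊥ ∧ LSet P x y = {⊥}}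

/-- The zero-divisor graph `Γ(P)` on `Z(P)^×`. -/
def zdGraph (P : Type*) [PartialOrder P] [OrderBot P] : SimpleGraph (ZDivX P) where
  Adj a b := (a : P) ≠ (b : P) ∧ LSet P a b = {⊥}
  symm := by
    constructor
    rintro a b ⟨h1, h2⟩
    exact ⟨fun h => h1 h.symm, by rw [LSet_comm]; exact h2⟩
  loopless := by constructor; rintro a ⟨h1, _⟩; exact h1 rfl

/-- The equivalence `x ∼ y ↔ ann(x) = ann(y)` on `Z(P)^×`. -/
def annSetoid (P : Type*) [PartialOrder P] [OrderBot P] : Setoid (ZDivX P) where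
  r a b := ann P a = ann P b
  iseqv := ⟨fun _ => rfl, Eq.symm, Eq.trans⟩

/-- The reduced zero-divisor graph `Γ_E(P)`, on equivalence classes of `Z(P)^×`. -/
def redGraph (P : Type*) [PartialOrder P] [OrderBot P] :
    SimpleGraph (Quotient (annSetoid P)) where
  Adj := Quotient.lift₂ (fun a b => LSet P (a : P) (b : P) = {⊥}) (by
    intro a b a' b' ha hb
    have ha' : ann P (a : P) = ann P (a' : P) := ha
    have hb' : ann P (b : P) = ann P (b' : P) := hb
    apply propext
    constructor
    · intro h
      have h1 : (b : P) ∈ ann P (a : P) := h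
      rw [ha', mem_ann_comm, hb', mem_ann_comm] at h1
      exact h1
    · intro h
      have h1 : (b' : P) ∈ ann P (a' : P) := h
      rw [← ha', mem_ann_comm, ← hb', mem_ann_comm] at h1
      exact h1)
  symm := by
    constructor
    intro x y
    refine Quotient.inductionOn₂ x y ?_
    intro a b h
    have h' : LSet P (a : P) (b : P) = {⊥} := h
    show LSet P (b : P) (a : P) = {⊥}
    rw [LSet_comm]; exact h'
  loopless := by
    constructor
    intro x
    refine Quotient.inductionOn x ?_
    intro a h
    have h' : LSet P (a : P) (a : P) = {⊥} := h
    have hm : (a : P) ∈ LSet P (a : P) (a : P) := ⟨le_refl _, le_refl _⟩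
    rw [h'] at hm
    exact a.2.1 hm

/-!
Two vertices of `Γ_E(P)` with the same neighbourhood have the same annihilator, so they coincide;
and every vertex has a neighbour. In a graph on three vertices with these two properties, a
non-edge `qr` is impossible: some `s` is adjacent to exactly one of `q, r`, say to `q`, and then a
neighbour of `r` would be a fourth vertex.
-/

theorem SimpleGraph.eq_top_of_card_le_three {V : Type*} [Finite V] (G : SimpleGraph V)
    (hV : Nat.card V ≤ 3) (hG : ∀ v, ∃ w, G.Adj v w) (hN : Function.Injective G.neighborSet) :
    G = ⊤ := by
  ext q r
  refine ⟨SimpleGraph.Adj.ne, fun hqr : q ≠ r => ?_⟩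
  by_contra hnot
  obtain ⟨s, hs⟩ : ∃ s, ¬(G.Adj q s ↔ G.Adj r s) := by
    by_contra! h
    exact hqr (hN (Set.ext h))
  wlog hqs : G.Adj q s generalizing q r
  · exact this r q (Ne.symm hqr) (fun h => hnot h.symm) (hs ∘ Iff.symm) (by tauto)
  have hrs : ¬G.Adj r s := fun h => hs ⟨fun _ => h, fun _ => hqs⟩
  obtain ⟨u, hru⟩ := hG r
  have hcard : ({u, q, r, s} : Set V).ncard = 4 := by
    have hsr : s ≠ r := by rintro rfl; exact hnot hqs
    have huq : u ≠ q := by rintro rfl; exact hnot hru.symm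
    have hus : u ≠ s := by rintro rfl; exact hrs hru
    rw [Set.ncard_insert_of_notMem, Set.ncard_insert_of_notMem, Set.ncard_pair hsr.symm]
    · simp [hqr, hqs.ne]
    · simp [huq, hru.ne.symm, hus]
  have := Set.ncard_le_card ({u, q, r, s} : Set V)
  omega

section ReducedZeroDivisorGraph

variable {P : Type*} [PartialOrder P] [OrderBot P]

theorem bot_mem_ann (x : P) : (⊥ : P) ∈ ann P x :=
  Set.eq_singleton_iff_unique_mem.mpr ⟨⟨bot_le, bot_le⟩, fun _ h => le_bot_iff.mp h.2⟩

theorem mem_ZDivX_of_mem_ann {x y : P} (hx : x ≠ ⊥) (hy : y ≠ ⊥) (h : y ∈ ann P x) :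
    y ∈ ZDivX P :=
  ⟨hy, x, hx, (mem_ann_comm P x y).mp h⟩

theorem redGraph_exists_adj (q : Quotient (annSetoid P)) : ∃ r, (redGraph P).Adj q r := by
  induction q using Quotient.inductionOn with
  | h a =>
    obtain ⟨y, hy, hay⟩ := a.2.2
    exact ⟨⟦⟨y, mem_ZDivX_of_mem_ann a.2.1 hy hay⟩⟧, hay⟩

theorem ann_subset_of_neighborSet_subset {a b : ZDivX P}
    (h : (redGraph P).neighborSet ⟦a⟧ ⊆ (redGraph P).neighborSet ⟦b⟧) :
    ann P a ⊆ ann P b := by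
  intro y hy
  by_cases hy0 : y = ⊥
  · exact hy0 ▸ bot_mem_ann _
  · have hyZ := mem_ZDivX_of_mem_ann a.2.1 hy0 hy
    exact h (show ⟦⟨y, hyZ⟩⟧ ∈ (redGraph P).neighborSet ⟦a⟧ from hy)

theorem redGraph_neighborSet_injective : Function.Injective (redGraph P).neighborSet := by
  intro q r
  induction q, r using Quotient.inductionOn₂ with
  | h a b =>
    intro h
    exact Quotient.sound <| (ann_subset_of_neighborSet_subset h.le).antisymm
      (ann_subset_of_neighborSet_subset h.ge)

end ReducedZeroDivisorGraph

theorem stmt8_general (P : Type*) [PartialOrder P] [OrderBot P]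
    (h3 : Nat.card (Quotient (annSetoid P)) = 3) :
    Nonempty (redGraph P ≃g (⊤ : SimpleGraph (Fin 3))) := by
  have : Finite (Quotient (annSetoid P)) := Nat.finite_of_card_ne_zero (by omega)
  rw [(redGraph P).eq_top_of_card_le_three h3.le redGraph_exists_adj redGraph_neighborSet_injective]
  exact ⟨SimpleGraph.Iso.completeGraph (Finite.equivFinOfCardEq h3)⟩

/-- If `Γ_E(P)` has exactly three vertices, then `Γ_E(P)` is the complete graph `K₃`. -/
theorem stmt8 (P : Type*) [PartialOrder P] [OrderBot P] (hZ : (ZDivX P).Nonempty)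
    (h3 : Nat.card (Quotient (annSetoid P)) = 3) :
    Nonempty (redGraph P ≃g (⊤ : SimpleGraph (Fin 3))) :=
  stmt8_general P h3
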